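/- Let 𝒜̃ be the covering noncrossing algebra of a finite Coxeter group W, with skew-derivations ∇_t and D_t defined on monomials by ∇_t(α_{t₁}⋯α_{t_k}) = Σ_i (−1)^{i−1} δ_{t,t_i} α_{t₁^{t_i}}⋯α_{t_{i−1}^{t_i}} α_{t_{i+1}}⋯α_{t_k} and D_t(α_{t₁}⋯α_{t_k}) = Σ_i (−1)^{k−i} δ_{t, t_i^{t_{i+1}⋯t_k}} α_{t₁}⋯α_{t_{i−1}} α_{t_{i+1}}⋯α_{t_k}. Then for all t, t′ ∈ T one has ∇_t D_{t′} = D_{t′} ∇_t. -/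

import Mathlib

/-!
Induct on a monomial by splitting off its first letter. In the `i`-th term of `∇_t` the letter
`t_i` equals `t`, so the prefix is conjugated by `t` itself and, by linearity,
`∇_t(α_s x) = δ_{t,s} x - α_{s^t} ∇_t x` for every `x`. Dually, on a monomial `m` with product
`π(m)`, `D_{t'}(α_s m) = α_s D_{t'} m + (-1)^{|m|} δ_{t', s^{π(m)}} m`. Every word occurring in
`∇_t m` is one letter shorter and has product `t⁻¹ π(m)`, whence
`D_{t'}(α_{s^t} ∇_t m) = α_{s^t} D_{t'} ∇_t m - (-1)^{|m|} δ_{t', s^{π(m)}} ∇_t m`, using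
`(s^t)^{t⁻¹ π(m)} = s^{π(m)}`. The two boundary terms `(-1)^{|m|} δ_{t', s^{π(m)}} ∇_t m` then
cancel in `∇_t D_{t'} (α_s m) - D_{t'} ∇_t (α_s m)`, and the induction hypothesis does the rest.
-/

open scoped Classical

/-- The absolute (reflection) length of `w`. -/
noncomputable def absLen {B : Type*} {W : Type*} [Group W] {M : CoxeterMatrix B}
    (cs : CoxeterSystem M W) (w : W) : ℕ :=
  sInf {k : ℕ | ∃ l : List W, (∀ t ∈ l, cs.IsReflection t) ∧ l.length = k ∧ l.prod = w}

/-- The set of reflections of a Coxeter system, as a type. -/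
abbrev Refl {B : Type*} {W : Type*} [Group W] {M : CoxeterMatrix B}
    (cs : CoxeterSystem M W) : Type _ := {t : W // cs.IsReflection t}

/-- Conjugation `s^u := u⁻¹ s u` of a reflection by a group element. -/
def conjR {B : Type*} {W : Type*} [Group W] {M : CoxeterMatrix B}
    {cs : CoxeterSystem M W} (s : Refl cs) (u : W) : Refl cs :=
  ⟨u⁻¹ * (s : W) * u, by have := s.2.conj u⁻¹; rwa [inv_inv] at this⟩

/-- The monomial `α_{t₁} ⋯ α_{t_k}` in the free algebra. -/
noncomputable def mono {B : Type*} {W : Type*} [Group W] {M : CoxeterMatrix B}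
    (cs : CoxeterSystem M W) (l : List (Refl cs)) : FreeAlgebra ℂ (Refl cs) :=
  (l.map (FreeAlgebra.ι ℂ)).prod

/-- The defining relations of the covering noncrossing algebra `𝒜̃`. -/
inductive CoverRel {B : Type*} {W : Type*} [Group W] [Fintype W] {M : CoxeterMatrix B}
    (cs : CoxeterSystem M W) :
    FreeAlgebra ℂ (Refl cs) → FreeAlgebra ℂ (Refl cs) → Prop
  | sq (t : Refl cs) :
      CoverRel cs (FreeAlgebra.ι ℂ t * FreeAlgebra.ι ℂ t) 0
  | sum (w : W) (h : absLen cs w = 2) :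
      CoverRel cs
        (∑ p : Refl cs × Refl cs,
          if (p.1 : W) * (p.2 : W) = w then
            FreeAlgebra.ι ℂ p.1 * FreeAlgebra.ι ℂ p.2 else 0) 0

section

variable {B W : Type*} [Group W] {M : CoxeterMatrix B} {cs : CoxeterSystem M W}

@[simp]
theorem coe_conjR (s : Refl cs) (u : W) : (conjR s u : W) = u⁻¹ * s * u := rfl

theorem conjR_conjR (s : Refl cs) (u v : W) : conjR (conjR s u) v = conjR s (u * v) := by
  ext; simp only [coe_conjR, mul_inv_rev]; group

theorem prod_map_conjR (l : List (Refl cs)) (u : W) :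
    ((l.map (conjR · u)).map Subtype.val).prod = u⁻¹ * (l.map Subtype.val).prod * u := by
  induction l with
  | nil => simp
  | cons s l ih => simp only [List.map_cons, List.prod_cons, ih, coe_conjR]; group

/-- The word that `∇` leaves after striking the letter at position `i`. -/
theorem prod_take_map_conjR_append_drop (l : List (Refl cs)) (i : Fin l.length) :
    ((((l.take i).map (conjR · (l.get i : W))) ++ l.drop (i + 1)).map Subtype.val).prod =
      (l.get i : W)⁻¹ * (l.map Subtype.val).prod := by
  conv_rhs => arg 2; rw [← List.take_append_drop i l, List.drop_eq_getElem_cons i.isLt]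
  simp only [List.map_append, List.prod_append, prod_map_conjR, List.map_cons, List.prod_cons,
    List.get_eq_getElem]
  group

theorem mono_cons (s : Refl cs) (l : List (Refl cs)) :
    mono cs (s :: l) = FreeAlgebra.ι ℂ s * mono cs l := by
  simp [mono]

theorem span_range_mono : Submodule.span ℂ (Set.range (mono cs)) = ⊤ := by
  have hclosure : (Submonoid.closure (Set.range (FreeAlgebra.ι ℂ (X := Refl cs))) : Set _)
      = Set.range (mono cs) := by
    rw [← FreeMonoid.mrange_lift]
    ext x
    simp only [SetLike.mem_coe, MonoidHom.mem_mrange, FreeMonoid.lift_apply, Set.mem_range]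
    exact (FreeMonoid.toList.surjective.exists (p := fun l => mono cs l = x)).symm
  rw [← hclosure, ← Algebra.adjoin_eq_span, FreeAlgebra.adjoin_range_ι, Algebra.top_toSubmodule]

end

section

variable {B W : Type*} [Group W] [Fintype W] {M : CoxeterMatrix B} {cs : CoxeterSystem M W}

local notation "mk" => RingQuot.mkAlgHom ℂ (CoverRel cs)

theorem span_range_mkAlgHom_mono : Submodule.span ℂ (Set.range fun l => mk (mono cs l)) = ⊤ := by
  change Submodule.span ℂ (Set.range ((mk).toLinearMap ∘ mono cs)) = ⊤
  rw [Set.range_comp, ← Submodule.map_span, span_range_mono, Submodule.map_top,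
    LinearMap.range_eq_top]
  exact RingQuot.mkAlgHom_surjective ℂ _

def IsNablaFamily (nabla : Refl cs → RingQuot (CoverRel cs) →ₗ[ℂ] RingQuot (CoverRel cs)) :
    Prop :=
  ∀ (t : Refl cs) (l : List (Refl cs)),
    nabla t (mk (mono cs l)) =
      ∑ i : Fin l.length, ((-1 : ℂ) ^ (i : ℕ)) •
        (if t = l.get i then
          mk (mono cs ((l.take (i : ℕ)).map (fun s => conjR s (l.get i : W)) ++
            l.drop ((i : ℕ) + 1)))
        else 0)

def IsDFamily (D : Refl cs → RingQuot (CoverRel cs) →ₗ[ℂ] RingQuot (CoverRel cs)) : Prop :=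
  ∀ (t : Refl cs) (l : List (Refl cs)),
    D t (mk (mono cs l)) =
      ∑ i : Fin l.length, ((-1 : ℂ) ^ (l.length - 1 - (i : ℕ))) •
        (if t = conjR (l.get i) (((l.drop ((i : ℕ) + 1)).map Subtype.val).prod) then
          mk (mono cs (l.eraseIdx (i : ℕ)))
        else 0)

variable {nabla D : Refl cs → RingQuot (CoverRel cs) →ₗ[ℂ] RingQuot (CoverRel cs)}

theorem IsNablaFamily.apply_mono_cons (hnabla : IsNablaFamily nabla) (t s : Refl cs)
    (l : List (Refl cs)) :
    nabla t (mk (mono cs (s :: l))) =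
      (if t = s then mk (mono cs l) else 0) -
        mk (FreeAlgebra.ι ℂ (conjR s t)) * nabla t (mk (mono cs l)) := by
  rw [hnabla, hnabla, Finset.mul_sum, sub_eq_add_neg, ← Finset.sum_neg_distrib]
  refine (Fin.sum_univ_succ (n := l.length) _).trans ?_
  congr 1
  · simp
  · refine Finset.sum_congr rfl fun i _ => ?_
    by_cases h : t = l.get i
    · subst h
      rw [if_pos rfl, if_pos (show l.get i = (s :: l).get i.succ from rfl), Fin.val_succ,
        pow_succ, mul_comm, mul_smul, neg_one_smul, mul_smul_comm, ← map_mul, ← mono_cons]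
      rfl
    · simp_all

theorem IsNablaFamily.apply_ι_mul (hnabla : IsNablaFamily nabla) (t s : Refl cs)
    (x : RingQuot (CoverRel cs)) :
    nabla t (mk (FreeAlgebra.ι ℂ s) * x) =
      (if t = s then x else 0) - mk (FreeAlgebra.ι ℂ (conjR s t)) * nabla t x := by
  have h : nabla t ∘ₗ LinearMap.mulLeft ℂ (mk (FreeAlgebra.ι ℂ s)) =
      (if t = s then LinearMap.id else 0) -
        LinearMap.mulLeft ℂ (mk (FreeAlgebra.ι ℂ (conjR s t))) ∘ₗ nabla t := by
    refine LinearMap.ext_on_range span_range_mkAlgHom_mono fun l => ?_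
    have := hnabla.apply_mono_cons t s l
    rw [mono_cons, map_mul] at this
    split_ifs at this ⊢ <;> simpa using this
  have := LinearMap.congr_fun h x
  split_ifs at this ⊢ <;> simpa using this

theorem IsDFamily.apply_mono_cons (hD : IsDFamily D) (t s : Refl cs) (l : List (Refl cs)) :
    D t (mk (mono cs (s :: l))) =
      mk (FreeAlgebra.ι ℂ s) * D t (mk (mono cs l)) +
        (-1 : ℂ) ^ l.length •
          (if t = conjR s (l.map Subtype.val).prod then mk (mono cs l) else 0) := by
  rw [hD, hD, Finset.mul_sum, add_comm]
  refine (Fin.sum_univ_succ (n := l.length) _).trans (congrArg₂ _ rfl ?_)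
  refine Finset.sum_congr rfl fun i _ => ?_
  rw [mul_smul_comm, mul_ite, mul_zero, ← map_mul, ← mono_cons]
  have hexp : (s :: l).length - 1 - (i.succ : ℕ) = l.length - 1 - i := by simp; omega
  rw [hexp]
  rfl

theorem IsDFamily.apply_ι_mul_nabla (hnabla : IsNablaFamily nabla) (hD : IsDFamily D)
    (t t' u : Refl cs) (l : List (Refl cs)) :
    D t' (mk (FreeAlgebra.ι ℂ u) * nabla t (mk (mono cs l))) =
      mk (FreeAlgebra.ι ℂ u) * D t' (nabla t (mk (mono cs l))) -
        (-1 : ℂ) ^ l.length • (if t' = conjR u ((t : W)⁻¹ * (l.map Subtype.val).prod)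
          then nabla t (mk (mono cs l)) else 0) := by
  set P := t' = conjR u ((t : W)⁻¹ * (l.map Subtype.val).prod)
  set φ := D t' ∘ₗ LinearMap.mulLeft ℂ (mk (FreeAlgebra.ι ℂ u)) -
    LinearMap.mulLeft ℂ (mk (FreeAlgebra.ι ℂ u)) ∘ₗ D t'
  suffices φ (nabla t (mk (mono cs l))) =
      -((-1 : ℂ) ^ l.length • if P then nabla t (mk (mono cs l)) else 0) by
    simp only [φ, LinearMap.sub_apply, LinearMap.comp_apply, LinearMap.mulLeft_apply,
      sub_eq_iff_eq_add'] at this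
    rw [this, sub_eq_add_neg]
  have hterm : ∀ i : Fin l.length, t = l.get i →
      φ (mk (mono cs ((l.take i).map (fun s => conjR s (l.get i : W)) ++ l.drop (i + 1)))) =
        -((-1 : ℂ) ^ l.length • if P then
          mk (mono cs ((l.take i).map (fun s => conjR s (l.get i : W)) ++ l.drop (i + 1)))
        else 0) := by
    intro i hi
    simp only [φ, LinearMap.sub_apply, LinearMap.comp_apply, LinearMap.mulLeft_apply, ← map_mul,
      ← mono_cons, hD.apply_mono_cons, add_sub_cancel_left]
    have hlen : ((l.take i).map (fun s => conjR s (l.get i : W)) ++ l.drop (i + 1)).length + 1 =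
        l.length := by simp; omega
    have hsign : (-1 : ℂ) ^ ((l.take i).map (fun s => conjR s (l.get i : W)) ++
        l.drop (i + 1)).length = -(-1) ^ l.length := by
      conv_rhs => rw [← hlen, pow_succ, mul_neg_one, neg_neg]
    rw [hsign, prod_take_map_conjR_append_drop, ← hi]
    exact neg_smul (M := RingQuot (CoverRel cs)) _ _
  rw [hnabla, map_sum]
  by_cases hP : P
  · rw [if_pos hP, Finset.smul_sum, ← Finset.sum_neg_distrib]
    refine Finset.sum_congr rfl fun i _ => ?_
    rw [map_smul, apply_ite φ, map_zero]
    split_ifs with hi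
    · rw [hterm i hi, if_pos hP, smul_neg, smul_comm]
    · rw [smul_zero, smul_zero, neg_zero]
  · rw [if_neg hP, smul_zero, neg_zero]
    refine Finset.sum_eq_zero fun i _ => ?_
    rw [map_smul, apply_ite φ, map_zero]
    split_ifs with hi
    · rw [hterm i hi, if_neg hP, smul_zero, neg_zero, smul_zero]
    · rw [smul_zero]

theorem nabla_D_apply_mono (hnabla : IsNablaFamily nabla) (hD : IsDFamily D) (t t' : Refl cs)
    (l : List (Refl cs)) :
    nabla t (D t' (mk (mono cs l))) = D t' (nabla t (mk (mono cs l))) := by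
  induction l with
  | nil => simp [hD t' [], hnabla t []]
  | cons s l ih =>
    rw [hD.apply_mono_cons, map_add, hnabla.apply_ι_mul, ih, map_smul, apply_ite (nabla t),
      map_zero, hnabla.apply_mono_cons, map_sub, apply_ite (D t'), map_zero,
      hD.apply_ι_mul_nabla hnabla, conjR_conjR, mul_inv_cancel_left]
    abel

end

/-- Let `𝒜̃` be the covering noncrossing algebra of a finite Coxeter
group `W`, with skew-derivations `∇_t` and `D_t` defined on monomials by the formulae
`∇_t(α_{t₁}⋯α_{t_k}) = Σ_i (−1)^{i−1} δ_{t,t_i} α_{t₁^{t_i}}⋯α_{t_{i−1}^{t_i}}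
α_{t_{i+1}}⋯α_{t_k}` and
`D_t(α_{t₁}⋯α_{t_k}) = Σ_i (−1)^{k−i} δ_{t, t_i^{t_{i+1}⋯t_k}}
α_{t₁}⋯α_{t_{i−1}} α_{t_{i+1}}⋯α_{t_k}`.
Then for all reflections `t, t′` one has `∇_t D_{t′} = D_{t′} ∇_t`. -/
theorem cover_nabla_comm_D (B : Type*) (W : Type*) [Group W] [Fintype W]
    (M : CoxeterMatrix B) (cs : CoxeterSystem M W)
    (nabla D : Refl cs → (RingQuot (CoverRel cs) →ₗ[ℂ] RingQuot (CoverRel cs)))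
    (hnabla : ∀ (t : Refl cs) (l : List (Refl cs)),
      nabla t (RingQuot.mkAlgHom ℂ (CoverRel cs) (mono cs l)) =
        ∑ i : Fin l.length, ((-1 : ℂ) ^ (i : ℕ)) •
          (if t = l.get i then
            RingQuot.mkAlgHom ℂ (CoverRel cs)
              (mono cs ((l.take (i : ℕ)).map (fun s => conjR s (l.get i : W))
                ++ l.drop ((i : ℕ) + 1)))
          else 0))
    (hD : ∀ (t : Refl cs) (l : List (Refl cs)),
      D t (RingQuot.mkAlgHom ℂ (CoverRel cs) (mono cs l)) =
        ∑ i : Fin l.length, ((-1 : ℂ) ^ (l.length - 1 - (i : ℕ))) •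
          (if t = conjR (l.get i) (((l.drop ((i : ℕ) + 1)).map Subtype.val).prod) then
            RingQuot.mkAlgHom ℂ (CoverRel cs) (mono cs (l.eraseIdx (i : ℕ)))
          else 0)) :
    ∀ t t' : Refl cs, nabla t ∘ₗ D t' = D t' ∘ₗ nabla t := fun t t' =>
  LinearMap.ext_on_range span_range_mkAlgHom_mono (nabla_D_apply_mono hnabla hD t t')
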